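/- If D is a family of tall summable ideals with |D| < 𝔟 (the bounding number), then there exists a tall summable ideal I_g such that I_g ⊆ I_h for every I_h ∈ D. -/

import Mathlib

/-!
Since `|D| < 𝔟`, the rates at which the members `h` of `D` go to zero are dominated by one
scale: there is `φ` such that for each `h`, eventually in `k`, `h n ≤ 2⁻ᵏ` for all `n ≥ φ k`.
Spreading `φ` out to a strictly increasing `ψ` whose `k`-th gap has length at least `2ᵏ`, the
staircase `g = 2⁻ᵏ` on `[ψ k, ψ (k+1))` tends to zero, has block sums at least `1`, and
eventually dominates every `h ∈ D`, so that `I_g ⊆ I_h`.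
-/

open Set Filter

/-- The summable ideal determined by `g`. -/
def Ig (g : ℕ → ℝ) : Set (Set ℕ) := {A | Summable (A.indicator g)}

/-- `g` determines a tall summable ideal: positive, divergent series, tends to `0`. -/
def SummableTall (g : ℕ → ℝ) : Prop :=
  (∀ n, 0 < g n) ∧ ¬ Summable g ∧ Tendsto g atTop (nhds 0)

/-- The bounding number 𝔟. -/
noncomputable def bddNum : Cardinal :=
  sInf {c | ∃ F : Set (ℕ → ℕ), Cardinal.mk ↥F = c ∧
    ∀ g : ℕ → ℕ, ∃ f ∈ F, ¬ ∀ᶠ n in atTop, f n ≤ g n}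

open Topology

lemma exists_eventually_le_of_mk_lt_bddNum {ι : Type} (f : ι → ℕ → ℕ)
    (h : Cardinal.mk ι < bddNum) :
    ∃ φ : ℕ → ℕ, ∀ i, ∀ᶠ n in atTop, f i n ≤ φ n := by
  by_contra! hunbdd
  have hle : bddNum ≤ Cardinal.mk (range f) := by
    refine csInf_le' ⟨range f, rfl, fun φ => ?_⟩
    obtain ⟨i, hi⟩ := hunbdd φ
    exact ⟨f i, mem_range_self i, fun hev =>
      (hi.and_eventually hev).exists.elim fun _ hn => hn.1.not_ge hn.2⟩
  exact lt_irrefl _ ((hle.trans Cardinal.mk_range_le).trans_lt h)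

lemma Ig_subset_Ig_of_eventually_le {g h : ℕ → ℝ} (h_nonneg : ∀ n, 0 ≤ h n)
    (hle : ∀ᶠ n in atTop, h n ≤ g n) : Ig g ⊆ Ig h := by
  intro A hA
  refine Summable.of_norm_bounded_eventually hA ?_
  rw [Nat.cofinite_eq_atTop]
  filter_upwards [hle] with n hn
  by_cases hnA : n ∈ A
  · simpa [indicator_of_mem hnA, abs_of_nonneg (h_nonneg n)] using hn
  · simp [indicator_of_notMem hnA]

lemma exists_forall_ge_le_half_pow {h : ℕ → ℝ} (hh : Tendsto h atTop (𝓝 0)) :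
    ∃ f : ℕ → ℕ, ∀ k, ∀ n ≥ f k, h n ≤ (1 / 2 : ℝ) ^ k := by
  have hev : ∀ k, ∀ᶠ n in atTop, h n ≤ (1 / 2 : ℝ) ^ k :=
    fun k => hh.eventually_le_const (by positivity)
  exact ⟨fun k => (eventually_atTop.mp (hev k)).choose,
    fun k => (eventually_atTop.mp (hev k)).choose_spec⟩

def spreadOut (φ : ℕ → ℕ) : ℕ → ℕ
  | 0 => φ 0
  | k + 1 => max (φ (k + 1)) (spreadOut φ k + 2 ^ k)

lemma le_spreadOut (φ : ℕ → ℕ) : ∀ k, φ k ≤ spreadOut φ k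
  | 0 => le_rfl
  | _ + 1 => le_max_left _ _

lemma spreadOut_add_two_pow_le (φ : ℕ → ℕ) (k : ℕ) :
    spreadOut φ k + 2 ^ k ≤ spreadOut φ (k + 1) :=
  le_max_right _ _

lemma spreadOut_strictMono (φ : ℕ → ℕ) : StrictMono (spreadOut φ) :=
  strictMono_nat_of_lt_succ fun k => by
    have := spreadOut_add_two_pow_le φ k
    have := Nat.one_le_two_pow (n := k)
    omega

section Staircase

variable {ψ : ℕ → ℕ}

/-- The index `k` of the block `[ψ k, ψ (k + 1))` containing `n` (and `0` below `ψ 0`). -/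
def blockIndex (ψ : ℕ → ℕ) (n : ℕ) : ℕ := Nat.findGreatest (fun k => ψ k ≤ n) n

noncomputable def staircase (ψ : ℕ → ℕ) (n : ℕ) : ℝ := (1 / 2) ^ blockIndex ψ n

lemma le_blockIndex (hψ : StrictMono ψ) {k n : ℕ} (h : ψ k ≤ n) : k ≤ blockIndex ψ n :=
  Nat.le_findGreatest (hψ.le_apply.trans h) h

lemma apply_blockIndex_le {n : ℕ} (h : ψ 0 ≤ n) : ψ (blockIndex ψ n) ≤ n := by
  by_cases h0 : blockIndex ψ n = 0
  · rwa [h0]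
  · exact Nat.findGreatest_spec (P := fun k => ψ k ≤ n) (Nat.zero_le n) h

lemma blockIndex_eq (hψ : StrictMono ψ) {k n : ℕ} (h₁ : ψ k ≤ n) (h₂ : n < ψ (k + 1)) :
    blockIndex ψ n = k := by
  have hge : k ≤ blockIndex ψ n := le_blockIndex hψ h₁
  have hlt : blockIndex ψ n < k + 1 :=
    hψ.lt_iff_lt.mp ((apply_blockIndex_le ((hψ.monotone k.zero_le).trans h₁)).trans_lt h₂)
  omega

lemma staircase_pos (n : ℕ) : 0 < staircase ψ n := by
  unfold staircase
  positivity

lemma tendsto_staircase (hψ : StrictMono ψ) : Tendsto (staircase ψ) atTop (𝓝 0) := by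
  have hblock : Tendsto (blockIndex ψ) atTop atTop :=
    tendsto_atTop.2 fun k => eventually_atTop.2 ⟨ψ k, fun _ => le_blockIndex hψ⟩
  exact (tendsto_pow_atTop_nhds_zero_of_lt_one (by norm_num) (by norm_num)).comp hblock

lemma eventually_le_staircase (hψ : StrictMono ψ) {h : ℕ → ℝ}
    (hh : ∀ᶠ k in atTop, ∀ n ≥ ψ k, h n ≤ (1 / 2 : ℝ) ^ k) :
    ∀ᶠ n in atTop, h n ≤ staircase ψ n := by
  obtain ⟨k₀, hk₀⟩ := eventually_atTop.mp hh
  filter_upwards [eventually_ge_atTop (ψ k₀)] with n hn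
  exact hk₀ _ (le_blockIndex hψ hn) n
    (apply_blockIndex_le ((hψ.monotone k₀.zero_le).trans hn))

variable (hψ : StrictMono ψ) (hgap : ∀ k, ψ k + 2 ^ k ≤ ψ (k + 1))
include hψ hgap

lemma one_le_sum_staircase_block (k : ℕ) :
    1 ≤ ∑ n ∈ Finset.Ico (ψ k) (ψ (k + 1)), staircase ψ n := by
  have hconst : ∀ n ∈ Finset.Ico (ψ k) (ψ (k + 1)), staircase ψ n = (1 / 2 : ℝ) ^ k := by
    intro n hn
    rw [Finset.mem_Ico] at hn
    rw [staircase, blockIndex_eq hψ hn.1 hn.2]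
  have hlen : (2 : ℝ) ^ k ≤ ((ψ (k + 1) - ψ k : ℕ) : ℝ) := by
    have := hgap k
    exact_mod_cast (by omega : 2 ^ k ≤ ψ (k + 1) - ψ k)
  rw [Finset.sum_congr rfl hconst, Finset.sum_const, Nat.card_Ico, nsmul_eq_mul]
  calc (1 : ℝ) = 2 ^ k * (1 / 2) ^ k := by rw [← mul_pow]; norm_num
    _ ≤ ((ψ (k + 1) - ψ k : ℕ) : ℝ) * (1 / 2) ^ k := by gcongr

lemma not_summable_staircase : ¬ Summable (staircase ψ) := by
  intro hsum
  have hpartial : ∀ K : ℕ, (K : ℝ) ≤ ∑ n ∈ Finset.Ico (ψ 0) (ψ K), staircase ψ n := by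
    intro K
    induction K with
    | zero => simp
    | succ K ih =>
      rw [← Finset.sum_Ico_consecutive _ (hψ.monotone K.zero_le) (hψ.monotone K.le_succ)]
      push_cast
      linarith [one_le_sum_staircase_block hψ hgap K]
  obtain ⟨K, hK⟩ := exists_nat_gt (∑' n, staircase ψ n)
  linarith [hpartial K, hsum.sum_le_tsum (Finset.Ico (ψ 0) (ψ K)) fun n _ => (staircase_pos n).le]

lemma summableTall_staircase : SummableTall (staircase ψ) :=
  ⟨staircase_pos, not_summable_staircase hψ hgap, tendsto_staircase hψ⟩

end Staircase

theorem Bcentr (D : Set (Set (Set ℕ)))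
    (hD : ∀ I ∈ D, ∃ h : ℕ → ℝ, SummableTall h ∧ I = Ig h)
    (hcard : Cardinal.mk ↥D < bddNum) :
    ∃ g : ℕ → ℝ, SummableTall g ∧ ∀ I ∈ D, Ig g ⊆ I := by
  choose h htall hIh using hD
  choose f hf using fun I : D => exists_forall_ge_le_half_pow (htall I I.2).2.2
  obtain ⟨φ, hφ⟩ := exists_eventually_le_of_mk_lt_bddNum f hcard
  have hψ := spreadOut_strictMono φ
  refine ⟨staircase (spreadOut φ),
    summableTall_staircase hψ (spreadOut_add_two_pow_le φ), fun I hI => ?_⟩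
  rw [hIh I hI]
  refine Ig_subset_Ig_of_eventually_le (fun n => ((htall I hI).1 n).le)
    (eventually_le_staircase hψ ?_)
  filter_upwards [hφ ⟨I, hI⟩] with k hk n hn
  exact hf ⟨I, hI⟩ k n (hk.trans ((le_spreadOut φ k).trans hn))
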